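/- arXiv:1204.0927 — 4 statements merged into one kernel-verified Lean document; each statement's English description precedes it below -/
import Mathlib

section
/- Let k ⊆ K be number fields with [K:k] = e. Then for any α, β ∈ K with k(α, β) = K, there exist a primitive element ξ = m₁α + m₂β with rational integers 0 ≤ m₁, m₂ < e satisfying k(ξ) = K and H(1, ξ) ≤ 2e · H(1, α, β). Consequently δ(K/k) ≤ 2e · δ_g(K/k) for every g ∈ G(K/k), where δ(K/k) = inf{H(1,α) : K = k(α)} and δ_g(K/k) = inf{H(1,α,β) : k(α,β) = K, [k(α):k] = g}. -/
open scoped Classical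

open NumberField

/-- The absolute non-logarithmic Weil height of a tuple `(x₀,…,x_{m-1})` of elements of a
number field `K`: the product over all places of the maximum of the absolute values, with
the standard normalizations (the contribution of the finite places being the inverse of
the absolute norm of the fractional ideal generated by the coordinates), raised to `1/d`
where `d = [K:ℚ]`. -/
noncomputable def heightTuple (K : Type*) [Field K] [NumberField K] {m : ℕ}
    (x : Fin m → K) : ℝ :=
  ((∏ v : InfinitePlace K, (⨆ i, v (x i)) ^ v.mult) /
      ((FractionalIdeal.absNorm (FractionalIdeal.spanFinset (𝓞 K) Finset.univ x) : ℚ) : ℝ)) ^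
    ((Module.finrank ℚ K : ℝ)⁻¹)

/-- `δ(K/k)`: the infimum of `H(1,α)` over generators `α` of `K/k`. -/
noncomputable def deltaKk (k K : Type*) [Field k] [Field K] [Algebra k K]
    [NumberField K] : ℝ :=
  sInf {h : ℝ | ∃ α : K, IntermediateField.adjoin k {α} = ⊤ ∧ h = heightTuple K ![1, α]}

/-- `δ_g(K/k)`: the infimum of `H(1,α,β)` over pairs `α, β` with `k(α,β) = K` and
`[k(α):k] = g`. -/
noncomputable def deltaG (k K : Type*) [Field k] [Field K] [Algebra k K]
    [NumberField K] (g : ℕ) : ℝ :=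
  sInf {h : ℝ | ∃ α β : K, IntermediateField.adjoin k {α, β} = ⊤ ∧
    Module.finrank k (IntermediateField.adjoin k {α}) = g ∧
    h = heightTuple K ![1, α, β]}

/-- `G(K/k)`: the set of degrees `[K₀:k]` of proper intermediate fields `k ⊆ K₀ ⊊ K`,
taken to be `{1}` when `K = k`. -/
noncomputable def GSet (k K : Type*) [Field k] [Field K] [Algebra k K] : Set ℕ :=
  if Module.finrank k K = 1 then {1}
  else {g : ℕ | ∃ K₀ : IntermediateField k K, K₀ ≠ ⊤ ∧ Module.finrank k K₀ = g}

/-!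
If `ξ_t = α + t β` does not generate `K/k`, some `k`-embedding `σ ≠ ι` of `K` into an algebraic
closure agrees with `ι` on `ξ_t`. As `α, β` generate `K`, a given `σ` can do so for at most one
`t`, so one of the `e` elements `ξ_0, …, ξ_{e-1}` is primitive. The height bound is checked place
by place: at an infinite place `|m₁α + m₂β| ≤ (m₁ + m₂) max(1, |α|, |β|)`, and the finite places
only see the fractional ideals generated by the coordinates, where `(1, ξ) ⊆ (1, α, β)`.
Taking infima gives the bound on `δ(K/k)`.
-/

open IntermediateField
open scoped nonZeroDivisors

namespace FractionalIdeal

variable {R : Type*} [CommRing R] [IsDedekindDomain R] [Module.Free ℤ R] [Module.Finite ℤ R]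
  {K : Type*} [Field K] [Algebra R K] [IsFractionRing R K]

theorem one_le_absNorm_of_le_one {I : FractionalIdeal R⁰ K} (hI : I ≠ 0) (h : I ≤ 1) :
    1 ≤ absNorm I := by
  obtain ⟨I₀, rfl⟩ := le_one_iff_exists_coeIdeal.mp h
  have hI₀ : I₀ ≠ ⊥ := by rintro rfl; exact hI coeIdeal_bot
  rw [coeIdeal_absNorm]
  exact_mod_cast Nat.one_le_iff_ne_zero.mpr (Ideal.absNorm_eq_zero_iff.not.mpr hI₀)

theorem absNorm_le_absNorm_of_le {I J : FractionalIdeal R⁰ K} (hI : I ≠ 0) (h : I ≤ J) :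
    absNorm J ≤ absNorm I := by
  have hJ : J ≠ 0 := ne_bot_of_le_ne_bot hI h
  have hquot : 1 ≤ absNorm (J⁻¹ * I) :=
    one_le_absNorm_of_le_one (mul_ne_zero (inv_ne_zero hJ) hI)
      ((mul_le_mul_right h _).trans (inv_mul_cancel₀ hJ).le)
  calc absNorm J = absNorm J * 1 := (mul_one _).symm
    _ ≤ absNorm J * absNorm (J⁻¹ * I) := by gcongr; exact absNorm_nonneg J
    _ = absNorm I := by rw [← map_mul, mul_inv_cancel_left₀ hJ]

end FractionalIdeal

section Height

variable {K : Type*} [Field K] [NumberField K]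

theorem heightTuple_nonneg {m : ℕ} (x : Fin m → K) : 0 ≤ heightTuple K x := by
  refine Real.rpow_nonneg (div_nonneg (Finset.prod_nonneg fun v _ => pow_nonneg ?_ _) ?_) _
  · exact Real.iSup_nonneg fun _ => apply_nonneg v _
  · exact_mod_cast FractionalIdeal.absNorm_nonneg _

theorem heightTuple_le_mul_of_le {m n : ℕ} {x : Fin m → K} {y : Fin n → K} {c : ℝ} (hc : 0 ≤ c)
    (hv : ∀ v : InfinitePlace K, ⨆ i, v (x i) ≤ c * ⨆ j, v (y j))
    (hI : FractionalIdeal.spanFinset (𝓞 K) Finset.univ x ≤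
      FractionalIdeal.spanFinset (𝓞 K) Finset.univ y) :
    heightTuple K x ≤ c * heightTuple K y := by
  unfold heightTuple
  set Ix := FractionalIdeal.spanFinset (𝓞 K) Finset.univ x
  set Iy := FractionalIdeal.spanFinset (𝓞 K) Finset.univ y
  set d := Module.finrank ℚ K
  have hd : d ≠ 0 := Module.finrank_pos.ne'
  rcases eq_or_ne Ix 0 with hIx | hIx
  · rw [hIx, map_zero, Rat.cast_zero, div_zero, Real.zero_rpow (by positivity)]
    exact mul_nonneg hc (heightTuple_nonneg y)
  have hsup (v : InfinitePlace K) {l : ℕ} (z : Fin l → K) : 0 ≤ ⨆ i, v (z i) :=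
    Real.iSup_nonneg fun _ => apply_nonneg v _
  have hprod : ∏ v : InfinitePlace K, (⨆ i, v (x i)) ^ v.mult ≤
      c ^ d * ∏ v : InfinitePlace K, (⨆ j, v (y j)) ^ v.mult := by
    calc ∏ v : InfinitePlace K, (⨆ i, v (x i)) ^ v.mult
        ≤ ∏ v : InfinitePlace K, (c * ⨆ j, v (y j)) ^ v.mult :=
          Finset.prod_le_prod (fun v _ => pow_nonneg (hsup v _) _)
            fun v _ => pow_le_pow_left₀ (hsup v x) (hv v) _
      _ = c ^ d * ∏ v : InfinitePlace K, (⨆ j, v (y j)) ^ v.mult := by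
        simp_rw [mul_pow, Finset.prod_mul_distrib, Finset.prod_pow_eq_pow_sum,
          InfinitePlace.sum_mult_eq, d]
  have hNy : (0 : ℝ) < (FractionalIdeal.absNorm Iy : ℚ) := by
    exact_mod_cast (FractionalIdeal.absNorm_nonneg Iy).lt_of_ne'
      (FractionalIdeal.absNorm_eq_zero_iff.not.mpr (ne_bot_of_le_ne_bot hIx hI))
  have hN : ((FractionalIdeal.absNorm Iy : ℚ) : ℝ) ≤ (FractionalIdeal.absNorm Ix : ℚ) := by
    exact_mod_cast FractionalIdeal.absNorm_le_absNorm_of_le hIx hI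
  have hP {l : ℕ} (z : Fin l → K) : 0 ≤ ∏ v : InfinitePlace K, (⨆ i, v (z i)) ^ v.mult :=
    Finset.prod_nonneg fun v _ => pow_nonneg (hsup v z) _
  calc ((∏ v : InfinitePlace K, (⨆ i, v (x i)) ^ v.mult) /
        ((FractionalIdeal.absNorm Ix : ℚ) : ℝ)) ^ (d : ℝ)⁻¹
      ≤ (c ^ d * ((∏ v : InfinitePlace K, (⨆ j, v (y j)) ^ v.mult) /
        ((FractionalIdeal.absNorm Iy : ℚ) : ℝ))) ^ (d : ℝ)⁻¹ := by
        rw [← mul_div_assoc]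
        refine Real.rpow_le_rpow ?_ (div_le_div₀ (by have := hP y; positivity) hprod hNy hN)
          (by positivity)
        exact div_nonneg (hP x) (by exact_mod_cast FractionalIdeal.absNorm_nonneg Ix)
    _ = c * ((∏ v : InfinitePlace K, (⨆ j, v (y j)) ^ v.mult) /
        ((FractionalIdeal.absNorm Iy : ℚ) : ℝ)) ^ (d : ℝ)⁻¹ := by
        rw [Real.mul_rpow (by positivity) (div_nonneg (hP y) hNy.le),
          Real.pow_rpow_inv_natCast hc hd]

theorem heightTuple_natCast_mul_add_natCast_mul_le (α β : K) (m₁ m₂ : ℕ) :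
    heightTuple K ![1, (m₁ : K) * α + (m₂ : K) * β] ≤
      (m₁ + m₂ + 1) * heightTuple K ![1, α, β] := by
  refine heightTuple_le_mul_of_le (by positivity) (fun v => ?_) ?_
  · have hle (i : Fin 3) : v (![1, α, β] i) ≤ ⨆ j, v (![1, α, β] j) :=
      le_ciSup (f := fun j => v (![1, α, β] j)) (Finite.bddAbove_range _) i
    have h1 : 1 ≤ ⨆ j, v (![1, α, β] j) := by simpa using hle 0
    refine ciSup_le fun i => ?_
    fin_cases i
    · simp only [Fin.zero_eta, Matrix.cons_val_zero, map_one]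
      nlinarith
    · simp only [Fin.mk_one, Matrix.cons_val_one, Matrix.cons_val_zero]
      have hα : v α ≤ ⨆ j, v (![1, α, β] j) := by simpa using hle 1
      have hβ : v β ≤ ⨆ j, v (![1, α, β] j) := by simpa using hle 2
      calc v ((m₁ : K) * α + (m₂ : K) * β) ≤ v ((m₁ : K) * α) + v ((m₂ : K) * β) :=
            v.1.add_le _ _
        _ = m₁ * v α + m₂ * v β := by simp only [map_mul, InfinitePlace.map_natCast]
        _ ≤ _ := by nlinarith
  · rw [← FractionalIdeal.coe_le_coe, FractionalIdeal.spanFinset_coe,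
      FractionalIdeal.spanFinset_coe, Submodule.span_le]
    have hmem (i : Fin 3) :
        ![1, α, β] i ∈ Submodule.span (𝓞 K) (![1, α, β] '' (Finset.univ : Finset (Fin 3))) :=
      Submodule.subset_span ⟨i, by simp, rfl⟩
    rintro _ ⟨i, -, rfl⟩
    fin_cases i
    · exact hmem 0
    · simp only [Fin.mk_one, Matrix.cons_val_one, Matrix.cons_val_zero, ← nsmul_eq_mul]
      exact add_mem (Submodule.smul_of_tower_mem _ _ (hmem 1))
        (Submodule.smul_of_tower_mem _ _ (hmem 2))

end Height

section PrimitiveElement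

variable {k K : Type*} [Field k] [Field K] [Algebra k K]

theorem AlgHom.eq_of_adjoin_pair_eq_top [Algebra.IsAlgebraic k K] {L : Type*} [Field L]
    [Algebra k L] {α β : K} (h : k⟮α, β⟯ = ⊤) {φ ψ : K →ₐ[k] L} (hα : φ α = ψ α)
    (hβ : φ β = ψ β) : φ = ψ := by
  refine AlgHom.ext_of_adjoin_eq_top (s := {α, β}) ?_ ?_
  · rw [← top_toSubalgebra, ← h,
      adjoin_toSubalgebra_of_isAlgebraic fun x _ => Algebra.IsAlgebraic.isAlgebraic x]
  · rintro x (rfl | rfl)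
    exacts [hα, hβ]

variable [FiniteDimensional k K] [Algebra.IsSeparable k K]

theorem exists_lt_finrank_adjoin_add_natCast_mul_eq_top [CharZero K] {α β : K}
    (h : k⟮α, β⟯ = ⊤) :
    ∃ t < Module.finrank k K, k⟮α + t * β⟯ = ⊤ := by
  let Ω := AlgebraicClosure K
  let ι : K →ₐ[k] Ω := IsScalarTower.toAlgHom k K Ω
  by_contra! hbad
  have hσ (t : Fin (Module.finrank k K)) :
      ∃ σ : {σ : K →ₐ[k] Ω // σ ≠ ι}, σ.1 (α + t * β) = ι (α + t * β) := by
    have := (Field.primitive_element_iff_algHom_eq_of_eval k Ω (fun _ => IsAlgClosed.splits _)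
      _ ι).not.mp (hbad t t.2)
    push Not at this
    obtain ⟨σ, hσ, hne⟩ := this
    exact ⟨⟨σ, hne.symm⟩, hσ.symm⟩
  choose σ hσ using hσ
  have hinj : Function.Injective σ := by
    intro s t hst
    by_contra hne
    have hs := hσ s
    have ht := hσ t
    rw [hst] at hs
    simp only [map_add, map_mul, map_natCast] at hs ht
    have hcast : ((s : ℕ) - (t : ℕ) : Ω) ≠ 0 :=
      sub_ne_zero.mpr (Nat.cast_injective.ne (Fin.val_injective.ne hne))
    have hβ : (σ t).1 β = ι β := by
      have : ((s : ℕ) - (t : ℕ) : Ω) * ((σ t).1 β - ι β) = 0 := by linear_combination hs - ht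
      exact sub_eq_zero.mp ((mul_eq_zero.mp this).resolve_left hcast)
    have hα : (σ t).1 α = ι α := by linear_combination ht - ((t : ℕ) : Ω) * hβ
    exact (σ t).2 (AlgHom.eq_of_adjoin_pair_eq_top h hα hβ)
  have := Fintype.card_le_of_injective σ hinj
  simp only [ne_eq, Fintype.card_subtype_compl, Fintype.card_unique, Fintype.card_fin,
    AlgHom.card] at this
  have := Module.finrank_pos (R := k) (M := K)
  omega

theorem exists_lt_finrank_adjoin_natCast_mul_add_natCast_mul_eq_top [CharZero K] {α β : K}
    (h : k⟮α, β⟯ = ⊤) :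
    ∃ m₁ m₂ : ℕ, m₁ < Module.finrank k K ∧ m₂ < Module.finrank k K ∧
      k⟮(m₁ : K) * α + (m₂ : K) * β⟯ = ⊤ := by
  rcases (Nat.one_le_iff_ne_zero.mpr (Module.finrank_pos (R := k) (M := K)).ne').eq_or_lt
    with he | he
  · refine ⟨0, 0, he ▸ zero_lt_one, he ▸ zero_lt_one, top_le_iff.mp ?_⟩
    rw [← bot_eq_top_iff_finrank_eq_one.mpr he.symm]
    exact bot_le
  · obtain ⟨t, ht, hgen⟩ := exists_lt_finrank_adjoin_add_natCast_mul_eq_top h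
    exact ⟨1, t, he, ht, by rwa [Nat.cast_one, one_mul]⟩

theorem exists_adjoin_eq_and_adjoin_pair_eq_top (K₀ : IntermediateField k K) :
    ∃ α β : K, k⟮α⟯ = K₀ ∧ k⟮α, β⟯ = ⊤ := by
  obtain ⟨α₀, hα₀⟩ := Field.exists_primitive_element k K₀
  obtain ⟨β, hβ⟩ := Field.exists_primitive_element K₀ K
  have hα : k⟮(α₀ : K)⟯ = K₀ := by
    simpa only [lift_adjoin_simple, lift_top]
      using congrArg IntermediateField.lift hα₀
  refine ⟨α₀, β, hα, ?_⟩
  have := adjoin_adjoin_left k {(α₀ : K)} {β}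
  rw [hα, hβ, restrictScalars_top, Set.singleton_union] at this
  exact this.symm

theorem exists_lt_finrank_adjoin_eq_top_heightTuple_le [NumberField K] {α β : K}
    (h : k⟮α, β⟯ = ⊤) :
    ∃ m₁ m₂ : ℕ, m₁ < Module.finrank k K ∧ m₂ < Module.finrank k K ∧
      k⟮(m₁ : K) * α + (m₂ : K) * β⟯ = ⊤ ∧
      heightTuple K ![1, (m₁ : K) * α + (m₂ : K) * β] ≤
        2 * Module.finrank k K * heightTuple K ![1, α, β] := by
  obtain ⟨m₁, m₂, h₁, h₂, hξ⟩ := exists_lt_finrank_adjoin_natCast_mul_add_natCast_mul_eq_top h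
  refine ⟨m₁, m₂, h₁, h₂, hξ, (heightTuple_natCast_mul_add_natCast_mul_le α β m₁ m₂).trans ?_⟩
  gcongr
  · exact heightTuple_nonneg _
  · exact_mod_cast (by omega : m₁ + m₂ + 1 ≤ 2 * Module.finrank k K)

end PrimitiveElement

theorem exists_finrank_eq_of_mem_GSet {k K : Type*} [Field k] [Field K] [Algebra k K] {g : ℕ}
    (hg : g ∈ GSet k K) : ∃ K₀ : IntermediateField k K, Module.finrank k K₀ = g := by
  unfold GSet at hg
  split_ifs at hg
  · exact ⟨⊥, by rw [Set.mem_singleton_iff.mp hg, IntermediateField.finrank_bot]⟩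
  · obtain ⟨K₀, -, hK₀⟩ := hg
    exact ⟨K₀, hK₀⟩

theorem Real.sInf_le_mul_sInf_of_forall_exists_le {S T : Set ℝ} {c : ℝ} (hc : 0 ≤ c)
    (hT : BddBelow T) (hS : S.Nonempty) (h : ∀ s ∈ S, ∃ t ∈ T, t ≤ c * s) :
    sInf T ≤ c * sInf S := by
  rw [← smul_eq_mul, ← Real.sInf_smul_of_nonneg hc]
  refine le_csInf (hS.smul_set) ?_
  rintro _ ⟨s, hs, rfl⟩
  obtain ⟨t, ht, hts⟩ := h s hs
  exact (csInf_le hT ht).trans hts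

/-- For number fields `k ⊆ K` with `[K:k] = e`: for all `α, β ∈ K` with `k(α,β) = K`
there are integers `0 ≤ m₁, m₂ < e` such that `ξ = m₁α + m₂β` satisfies `k(ξ) = K` and
`H(1,ξ) ≤ 2e·H(1,α,β)`; consequently `δ(K/k) ≤ 2e·δ_g(K/k)` for all `g ∈ G(K/k)`. -/
theorem stmt12 (k K : Type*) [Field k] [Field K] [Algebra k K]
    [NumberField k] [NumberField K] [FiniteDimensional k K]
    (e : ℕ) (he : Module.finrank k K = e) :
    (∀ α β : K, IntermediateField.adjoin k {α, β} = ⊤ →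
      ∃ m₁ m₂ : ℕ, m₁ < e ∧ m₂ < e ∧
        IntermediateField.adjoin k {((m₁ : K) * α + (m₂ : K) * β)} = ⊤ ∧
        heightTuple K ![1, (m₁ : K) * α + (m₂ : K) * β] ≤
          2 * e * heightTuple K ![1, α, β]) ∧
    (∀ g ∈ GSet k K, deltaKk k K ≤ 2 * e * deltaG k K g) := by
  subst he
  refine ⟨fun α β => exists_lt_finrank_adjoin_eq_top_heightTuple_le, fun g hg => ?_⟩
  obtain ⟨K₀, hK₀⟩ := exists_finrank_eq_of_mem_GSet hg
  obtain ⟨α, β, hα, hαβ⟩ := exists_adjoin_eq_and_adjoin_pair_eq_top K₀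
  refine Real.sInf_le_mul_sInf_of_forall_exists_le (by positivity) ⟨0, ?_⟩
    ⟨_, α, β, hαβ, hα ▸ hK₀, rfl⟩ ?_
  · rintro _ ⟨γ, -, rfl⟩
    exact heightTuple_nonneg _
  · rintro _ ⟨α, β, hαβ, -, rfl⟩
    obtain ⟨m₁, m₂, -, -, hξ, hH⟩ := exists_lt_finrank_adjoin_eq_top_heightTuple_le hαβ
    exact ⟨_, ⟨_, hξ, rfl⟩, hH⟩
end

section
/- Let K be a number field of degree d with regulator R_K, suppose the unit rank q = r + s − 1 is positive, and let u₁,…,u_q be a basis of the unit lattice l(U) ⊆ Σ ⊆ ℝ^{q+1} with orthogonality defect Ω(u₁,…,u_q) at most d^{2d} and with |u_j| ≥ 1/Q > 0 for all j, where Q depends only on d. Set n_j = ⌊|u_j|⌋ + 1 and t = n₁⋯n_q. Then √(q+1) R_K < t ≤ (1+Q)^q · d^{2d} · √(q+1) R_K. -/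
/-!
If `u₁,…,u_q` is a `ℤ`-basis of `l(U)`, the units `η_j` with `l(η_j) = u_j` generate `U` modulo
torsion, so `R_K` is the absolute value of the `q × q` minor of the matrix `(u_j)` obtained by
deleting one coordinate. Since the `u_j` lie in `Σ`, the Gram determinant of the `u_j` equals
`(q+1)` times the square of that minor, i.e. `(√(q+1) R_K)²`, and Hadamard's inequality gives
`√(q+1) R_K ≤ ∏ |u_j| < ∏ n_j`. The upper bound combines `n_j ≤ (1+Q)|u_j|` with the bound on
the orthogonality defect.
-/

open NumberField

/-- The image of the unit group under the logarithmic map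
`l(η) = (d_v log|σ_v(η)|)_v`, viewed inside the Euclidean space `ℝ^{q+1}` with
coordinates indexed by the archimedean places (it lies in the sum-zero hyperplane `Σ`). -/
def unitLogSet (K : Type*) [Field K] [NumberField K] :
    Set (EuclideanSpace ℝ (InfinitePlace K)) :=
  {x | ∃ η : (𝓞 K)ˣ, ∀ v : InfinitePlace K,
    x v = (v.mult : ℝ) * Real.log (v (algebraMap (𝓞 K) K (η : 𝓞 K)))}

open Matrix Module Submodule in
theorem Matrix.det_gram_le_prod_norm_sq {E : Type*} [NormedAddCommGroup E]
    [InnerProductSpace ℝ E] {n : ℕ} (v : Fin n → E) :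
    (gram ℝ v).det ≤ ∏ i, ‖v i‖ ^ 2 := by
  by_cases hv : LinearIndependent ℝ v
  swap
  · rw [not_ne_iff.mp (mt det_gram_ne_zero_iff_linearIndependent.mp hv)]
    positivity
  have := FiniteDimensional.span_of_finite ℝ (Set.finite_range v)
  let w : Fin n → span ℝ (Set.range v) := fun i => ⟨v i, subset_span ⟨i, rfl⟩⟩
  have hdim : finrank ℝ (span ℝ (Set.range v)) = Fintype.card (Fin n) :=
    finrank_span_eq_card hv
  let b := InnerProductSpace.gramSchmidtOrthonormalBasis hdim w
  have hgram : gram ℝ v = gram ℝ w := by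
    ext i j
    simp [gram_apply, w]
  have hdet : (gram ℝ v).det = (∏ i, inner ℝ (b i) (w i)) ^ 2 := by
    rw [hgram, gram_eq_conjTranspose_mul b, det_mul, det_conjTranspose, star_trivial, ← sq,
      ← InnerProductSpace.gramSchmidtOrthonormalBasis_det hdim w, Basis.det_apply]
    rfl
  rw [hdet, ← Finset.prod_pow]
  refine Finset.prod_le_prod (fun i _ => sq_nonneg _) fun i _ => ?_
  calc inner ℝ (b i) (w i) ^ 2 = |inner ℝ (b i) (w i)| ^ 2 := (sq_abs _).symm
    _ ≤ (‖b i‖ * ‖w i‖) ^ 2 := by gcongr; exact abs_real_inner_le_norm _ _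
    _ = ‖v i‖ ^ 2 := by simp [b.orthonormal.1 i, w]

open Matrix in
theorem Matrix.det_mul_transpose_of_sum_row_eq_zero {R n : Type*} [CommRing R] [Fintype n]
    [DecidableEq n] (j₀ : n) (A : Matrix {j // j ≠ j₀} n R) (hA : ∀ i, ∑ j, A i j = 0) :
    (A * Aᵀ).det = Fintype.card n * (A.submatrix id Subtype.val).det ^ 2 := by
  -- `A = N * S` with `S = [1 | -𝟙]` (column `j₀` last), and `S * Sᵀ = 1 + 𝟙 𝟙ᵀ`.
  set N : Matrix {j // j ≠ j₀} {j // j ≠ j₀} R := A.submatrix id Subtype.val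
  let S : Matrix {j // j ≠ j₀} n R :=
    of fun i j => (if j = i then 1 else 0) - (if j = j₀ then 1 else 0)
  have hS : A = N * S := by
    ext i j
    simp only [N, S, Matrix.mul_apply, submatrix_apply, id, of_apply, mul_sub,
      Finset.sum_sub_distrib, mul_ite, mul_one, mul_zero]
    by_cases hj : j = j₀
    · subst hj
      have hrow := Fintype.sum_eq_add_sum_subtype_ne (A i) j
      rw [hA i] at hrow
      rw [Finset.sum_eq_zero fun x _ => if_neg (Ne.symm x.2)]
      simp only [↓reduceIte]
      linear_combination -hrow
    · have := Fintype.sum_ite_eq (⟨j, hj⟩ : {j // j ≠ j₀}) (fun x => A i x)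
      simp_all [Subtype.ext_iff]
  have hSS :
      S * Sᵀ = 1 + replicateCol Unit (fun _ => (1 : R)) * replicateRow Unit (fun _ => (1 : R)) := by
    ext i i'
    simp [S, Matrix.mul_apply, mul_sub, Finset.sum_sub_distrib, one_apply, i'.2.symm, i.2.symm,
      Subtype.coe_inj, eq_comm]
  have hdetSS : (S * Sᵀ).det = Fintype.card n := by
    rw [hSS, det_one_add_replicateCol_mul_replicateRow]
    simpa [dotProduct, add_comm] using
      (Fintype.sum_eq_add_sum_subtype_ne (fun _ => (1 : R)) j₀).symm
  calc (A * Aᵀ).det = (N * (S * Sᵀ) * Nᵀ).det := by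
        rw [hS, transpose_mul, Matrix.mul_assoc, Matrix.mul_assoc, Matrix.mul_assoc]
    _ = Fintype.card n * N.det ^ 2 := by
        rw [det_mul, det_mul, det_transpose, hdetSS]; ring

namespace NumberField.Units

open dirichletUnitTheorem

variable {K : Type*} [Field K] [NumberField K]

theorem closure_sup_torsion_eq_top_of_unitLogSet_subset_span {ι : Type*} [Fintype ι]
    {u : ι → EuclideanSpace ℝ (InfinitePlace K)} {η : ι → (𝓞 K)ˣ}
    (hu : ∀ j v, u j v = (v.mult : ℝ) * Real.log (v (algebraMap (𝓞 K) K (η j : 𝓞 K))))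
    (hspan : ∀ x ∈ unitLogSet K, ∃ c : ι → ℤ, x = ∑ j, c j • u j) :
    Subgroup.closure (Set.range η) ⊔ torsion K = ⊤ := by
  refine eq_top_iff.mpr fun ξ _ => ?_
  obtain ⟨c, hc⟩ := hspan (WithLp.toLp 2 fun v => (v.mult : ℝ) * Real.log (v (ξ : K)))
    ⟨ξ, fun v => rfl⟩
  have hlog : logEmbedding K (Additive.ofMul ξ) =
      ∑ j, c j • logEmbedding K (Additive.ofMul (η j)) := by
    ext w
    simpa [hu] using congr_arg (fun x => x w.val) hc
  set y := ∏ j, η j ^ c j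
  have hy : y ∈ Subgroup.closure (Set.range η) :=
    Subgroup.prod_mem _ fun j _ =>
      Subgroup.zpow_mem _ (Subgroup.subset_closure (Set.mem_range_self j)) _
  have ht : ξ * y⁻¹ ∈ torsion K := by
    rw [← logEmbedding_eq_zero_iff, ofMul_mul, map_add, ofMul_inv, map_neg, hlog, ofMul_prod,
      map_sum]
    simp [ofMul_zpow, map_zsmul]
  simpa using Subgroup.mul_mem _ (Subgroup.mem_sup_right ht) (Subgroup.mem_sup_left hy)

theorem regOfFamily_eq_regulator {η : Fin (rank K) → (𝓞 K)ˣ}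
    (h : Subgroup.closure (Set.range η) ⊔ torsion K = ⊤) : regOfFamily η = regulator K := by
  have := regOfFamily_div_regulator η
  rwa [h, Subgroup.index_top, Nat.cast_one, div_eq_one_iff_eq (regulator_ne_zero K)] at this

open Matrix in
theorem det_gram_eq_rank_add_one_mul_regulator_sq
    {u : Fin (rank K) → EuclideanSpace ℝ (InfinitePlace K)} {η : Fin (rank K) → (𝓞 K)ˣ}
    (hu : ∀ j v, u j v = (v.mult : ℝ) * Real.log (v (algebraMap (𝓞 K) K (η j : 𝓞 K))))
    (h : Subgroup.closure (Set.range η) ⊔ torsion K = ⊤) :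
    (gram ℝ u).det = (rank K + 1) * regulator K ^ 2 := by
  classical
  let e := (equivFinRank K).symm
  let A : Matrix {w : InfinitePlace K // w ≠ w₀} (InfinitePlace K) ℝ := of fun i v => u (e i) v
  have hA : ∀ i, ∑ v, A i v = 0 := fun i => by simpa [A, hu] using sum_mult_mul_log (η (e i))
  have hgram : A * Aᵀ = (gram ℝ u).submatrix e e := by
    ext i i'
    simp [A, Matrix.mul_apply, gram_apply, PiLp.inner_apply, mul_comm]
  have hcard : Fintype.card (InfinitePlace K) = rank K + 1 := by
    have := Fintype.card_pos (α := InfinitePlace K)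
    rw [rank]
    omega
  have hreg : regulator K = |(A.submatrix id Subtype.val).det| := by
    rw [← regOfFamily_eq_regulator h, regOfFamily_eq_det η w₀ e]
    congr
    ext
    simp [A, hu]
  rw [← det_submatrix_equiv_self e, ← hgram, det_mul_transpose_of_sum_row_eq_zero w₀ A hA, hreg,
    sq_abs, hcard]
  push_cast
  -- `regOfFamily_eq_det` uses classical `DecidableEq` instances
  rfl

theorem sqrt_rank_add_one_mul_regulator_le_prod_norm
    {u : Fin (rank K) → EuclideanSpace ℝ (InfinitePlace K)} {η : Fin (rank K) → (𝓞 K)ˣ}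
    (hu : ∀ j v, u j v = (v.mult : ℝ) * Real.log (v (algebraMap (𝓞 K) K (η j : 𝓞 K))))
    (h : Subgroup.closure (Set.range η) ⊔ torsion K = ⊤) :
    Real.sqrt (rank K + 1) * regulator K ≤ ∏ j, ‖u j‖ := by
  have hsq : (Real.sqrt (rank K + 1) * regulator K) ^ 2 ≤ (∏ j, ‖u j‖) ^ 2 := by
    rw [mul_pow, Real.sq_sqrt (by positivity), ← det_gram_eq_rank_add_one_mul_regulator_sq hu h,
      ← Finset.prod_pow]
    exact Matrix.det_gram_le_prod_norm_sq u
  exact (pow_le_pow_iff_left₀ (mul_nonneg (Real.sqrt_nonneg _) (regulator_pos K).le)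
    (by positivity) two_ne_zero).mp hsq

end NumberField.Units

theorem Nat.floor_add_one_le_one_add_mul {Q x : ℝ} (hQ : 0 < Q) (hx : 1 / Q ≤ x) :
    (⌊x⌋₊ : ℝ) + 1 ≤ (1 + Q) * x := by
  have h1 : 1 ≤ Q * x := by rwa [div_le_iff₀' hQ] at hx
  have h2 : (⌊x⌋₊ : ℝ) ≤ x := Nat.floor_le ((one_div_pos.mpr hQ).le.trans hx)
  linarith

theorem stmt14_general (K : Type*) [Field K] [NumberField K]
    (d : ℕ)
    (q : ℕ) (hq : q = Units.rank K) (hq0 : 0 < q)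
    (u : Fin q → EuclideanSpace ℝ (InfinitePlace K))
    (hmem : ∀ j, u j ∈ unitLogSet K)
    (hspan : ∀ x ∈ unitLogSet K, ∃ c : Fin q → ℤ, x = ∑ j, c j • u j)
    (Q : ℝ) (hQ0 : 0 < Q)
    (hlow : ∀ j, 1 / Q ≤ ‖u j‖)
    (hΩ : ∏ j, ‖u j‖ ≤
      (d : ℝ) ^ (2 * d) * (Real.sqrt ((q : ℝ) + 1) * Units.regulator K)) :
    Real.sqrt ((q : ℝ) + 1) * Units.regulator K <
        ((∏ j, (⌊‖u j‖⌋₊ + 1) : ℕ) : ℝ) ∧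
      ((∏ j, (⌊‖u j‖⌋₊ + 1) : ℕ) : ℝ) ≤
        (1 + Q) ^ q * (d : ℝ) ^ (2 * d) *
          (Real.sqrt ((q : ℝ) + 1) * Units.regulator K) := by
  subst hq
  choose η hη using hmem
  have hsup := Units.closure_sup_torsion_eq_top_of_unitLogSet_subset_span hη hspan
  have hnorm_pos : ∀ j, 0 < ‖u j‖ := fun j => (one_div_pos.mpr hQ0).trans_le (hlow j)
  push_cast
  constructor
  · refine (Units.sqrt_rank_add_one_mul_regulator_le_prod_norm hη hsup).trans_lt ?_
    exact Finset.prod_lt_prod_of_nonempty (fun j _ => hnorm_pos j)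
      (fun j _ => Nat.lt_floor_add_one _) (Finset.univ_nonempty_iff.mpr ⟨⟨0, hq0⟩⟩)
  · calc ∏ j, ((⌊‖u j‖⌋₊ : ℝ) + 1) ≤ ∏ j, (1 + Q) * ‖u j‖ :=
          Finset.prod_le_prod (fun j _ => by positivity)
            fun j _ => Nat.floor_add_one_le_one_add_mul hQ0 (hlow j)
      _ = (1 + Q) ^ Units.rank K * ∏ j, ‖u j‖ := by
          rw [Finset.prod_mul_distrib, Finset.prod_const, Finset.card_univ, Fintype.card_fin]
      _ ≤ (1 + Q) ^ Units.rank K * (d : ℝ) ^ (2 * d) *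
            (Real.sqrt (Units.rank K + 1) * Units.regulator K) := by
          rw [mul_assoc]
          gcongr

/-- Schmidt's partition bound: if `u₁,…,u_q` is a `ℤ`-basis of the unit lattice `l(U)`
(of determinant `√(q+1)·R_K`) with orthogonality defect at most `d^{2d}` and with
`|u_j| ≥ 1/Q > 0` for all `j`, and `n_j = ⌊|u_j|⌋ + 1`, `t = n₁⋯n_q`, then
`√(q+1)·R_K < t ≤ (1+Q)^q·d^{2d}·√(q+1)·R_K`. -/
theorem stmt14 (K : Type*) [Field K] [NumberField K]
    (d : ℕ) (hd : Module.finrank ℚ K = d)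
    (q : ℕ) (hq : q = Units.rank K) (hq0 : 0 < q)
    (u : Fin q → EuclideanSpace ℝ (InfinitePlace K))
    (hmem : ∀ j, u j ∈ unitLogSet K)
    (hspan : ∀ x ∈ unitLogSet K, ∃ c : Fin q → ℤ, x = ∑ j, c j • u j)
    (hindep : LinearIndependent ℝ u)
    (Q : ℝ) (hQ0 : 0 < Q)
    (hlow : ∀ j, 1 / Q ≤ ‖u j‖)
    (hΩ : ∏ j, ‖u j‖ ≤
      (d : ℝ) ^ (2 * d) * (Real.sqrt ((q : ℝ) + 1) * Units.regulator K)) :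
    Real.sqrt ((q : ℝ) + 1) * Units.regulator K <
        ((∏ j, (⌊‖u j‖⌋₊ + 1) : ℕ) : ℝ) ∧
      ((∏ j, (⌊‖u j‖⌋₊ + 1) : ℕ) : ℝ) ≤
        (1 + Q) ^ q * (d : ℝ) ^ (2 * d) *
          (Real.sqrt ((q : ℝ) + 1) * Units.regulator K) :=
  stmt14_general K d q hq hq0 u hmem hspan Q hQ0 hlow hΩ
end

section
/- Let ω₀,…,ω_n ∈ K (a number field of degree d over ℚ) be elements of a fractional ideal 𝔄 ≠ 0, not all zero. If there exists a proper subfield K₁ ⊊ K containing all ratios ω_i/ω₀ (with ω₀ ≠ 0), then there are two distinct embeddings σ_a, σ_b of K into ℂ agreeing on K₁, and for each j with 1 ≤ j ≤ n, setting z₀ + iz₁ = σ_a(ω₀)/σ_b(ω₀), one has Re σ_a(ω_j) = z₀ Re σ_b(ω_j) − z₁ Im σ_b(ω_j) and Im σ_a(ω_j) = z₁ Re σ_b(ω_j) + z₀ Im σ_b(ω_j); in particular all archimedean embedding vectors σ(ω_j) (j ≥ 1) lie in a common real hyperplane of ℝ^d determined by ω₀. -/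
open scoped nonZeroDivisors

/-- If `ω₀,…,ω_n` are elements of a nonzero fractional ideal `𝔄` of a number field `K`,
with `ω₀ ≠ 0`, and all ratios `ω_i/ω₀` lie in a proper subfield `K₁ ⊊ K`, then there are
two distinct embeddings `σ_a, σ_b : K → ℂ` agreeing on `K₁` such that, with
`z₀ + i z₁ = σ_a(ω₀)/σ_b(ω₀)`, for every `j ≠ 0`:
`Re σ_a(ω_j) = z₀ Re σ_b(ω_j) − z₁ Im σ_b(ω_j)` and
`Im σ_a(ω_j) = z₁ Re σ_b(ω_j) + z₀ Im σ_b(ω_j)`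
(so all the embedding vectors `σ(ω_j)`, `j ≥ 1`, lie in a common real hyperplane). -/
theorem stmt15 (K : Type*) [Field K] [NumberField K]
    (𝔄 : FractionalIdeal (NumberField.RingOfIntegers K)⁰ K) (h𝔄 : 𝔄 ≠ 0)
    (n : ℕ) (ω : Fin (n + 1) → K) (hω : ∀ i, ω i ∈ 𝔄) (hω0 : ω 0 ≠ 0)
    (K₁ : IntermediateField ℚ K) (hK₁ : K₁ ≠ ⊤)
    (hratio : ∀ i, ω i / ω 0 ∈ K₁) :
    ∃ σa σb : K →+* ℂ, σa ≠ σb ∧ (∀ x ∈ K₁, σa x = σb x) ∧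
      ∀ j : Fin (n + 1), j ≠ 0 →
        (σa (ω j)).re = (σa (ω 0) / σb (ω 0)).re * (σb (ω j)).re -
            (σa (ω 0) / σb (ω 0)).im * (σb (ω j)).im ∧
        (σa (ω j)).im = (σa (ω 0) / σb (ω 0)).im * (σb (ω j)).re +
            (σa (ω 0) / σb (ω 0)).re * (σb (ω j)).im := by
  -- ℂ as a K₁-algebra via some embedding
  letI : Algebra K₁ ℂ := (IsAlgClosed.lift (R := ℚ) (S := K₁) (M := ℂ)).toRingHom.toAlgebra
  haveI : FiniteDimensional K₁ K := FiniteDimensional.right ℚ K₁ K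
  -- finrank K₁ K ≥ 2
  have h1 : Module.finrank K₁ K ≠ 1 := by
    intro h
    apply hK₁
    have hbt : (⊥ : Subalgebra K₁ K) = ⊤ := Subalgebra.bot_eq_top_of_finrank_eq_one h
    rw [eq_top_iff]
    intro x _
    have hx : x ∈ (⊤ : Subalgebra K₁ K) := trivial
    rw [← hbt, Algebra.mem_bot] at hx
    obtain ⟨y, hy⟩ := hx
    rw [← hy]
    exact y.2
  have h2 : 1 < Fintype.card (K →ₐ[K₁] ℂ) := by
    rw [AlgHom.card]
    exact lt_of_le_of_ne Module.finrank_pos (Ne.symm h1)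
  obtain ⟨σa', σb', hne⟩ := Fintype.exists_pair_of_one_lt_card h2
  refine ⟨σa'.toRingHom, σb'.toRingHom, ?_, ?_, ?_⟩
  · intro h
    exact hne (AlgHom.ext fun x => RingHom.congr_fun h x)
  · intro x hx
    have := σa'.commutes ⟨x, hx⟩
    have h2 := σb'.commutes ⟨x, hx⟩
    simpa using this.trans h2.symm
  · intro j hj
    have hb0 : σb' (ω 0) ≠ 0 := by
      simpa using (map_ne_zero σb'.toRingHom).mpr hω0
    have hratio' : σa' (ω j / ω 0) = σb' (ω j / ω 0) := by
      have ha := σa'.commutes ⟨_, hratio j⟩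
      have hb := σb'.commutes ⟨_, hratio j⟩
      simpa using ha.trans hb.symm
    have key : σa'.toRingHom (ω j)
        = (σa'.toRingHom (ω 0) / σb'.toRingHom (ω 0)) * σb'.toRingHom (ω j) := by
      have hωj : ω j = (ω j / ω 0) * ω 0 := (div_mul_cancel₀ _ hω0).symm
      simp only [AlgHom.toRingHom_eq_coe, RingHom.coe_coe]
      rw [hωj, map_mul, map_mul, hratio']
      field_simp
    rw [key]
    exact ⟨by simp [Complex.mul_re], by simp [Complex.mul_im]; ring⟩
end

section
/- Let q ≥ 1, let Σ = {x ∈ ℝ^{q+1} : x₁ + … + x_{q+1} = 0}, let δ⃗ = (d₁,…,d_{q+1}) with all d_i ≥ 1, and let F ⊆ Σ be a bounded set. Define F(T) = F + δ⃗·(−∞, log T] for T > 0. Then the boundary of exp(F(1)) (where exp acts coordinatewise) satisfies ∂(exp(F(1))) = exp(∂(F(1)))∪{0} = exp(∂F + (−∞,0]δ⃗) ∪ exp(F̄) ∪ {0}, where F̄ is the topological closure of F in Σ and ∂(F(1)) = (∂F + (−∞,0]δ⃗) ∪ F̄. -/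
/-- The boundary of `F` relative to the hyperplane `Σ = {x : Σᵢ xᵢ = 0}` of `ℝ^{q+1}`,
viewed as a subset of `ℝ^{q+1}`. -/
def relBoundary (q : ℕ) (F : Set (Fin (q + 1) → ℝ)) : Set (Fin (q + 1) → ℝ) :=
  Subtype.val ''
    frontier (Subtype.val ⁻¹' F : Set ↥{x : Fin (q + 1) → ℝ | ∑ i, x i = 0})

/-!
Since `δ⃗ ∉ Σ`, the map `(x, t) ↦ x + t δ⃗` is a homeomorphism `Σ × ℝ ≃ₜ ℝ^{q+1}` carrying
`F × (-∞, 0]` onto `F(1)`, so `∂(F(1))` is the image of `∂(F × (-∞, 0])`.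
The coordinatewise exponential is an open embedding onto the open positive orthant, so it
commutes with taking boundaries there, and the only new boundary point is `0`: along
`x + t δ⃗` with `x` bounded, `exp (x_j + t d_j)` is bounded by a multiple of
`exp (x_i + t d_i) ^ (d_j / d_i)`, so a limit point with one vanishing coordinate vanishes.
-/

open Set Filter Topology

section Hyperplane

variable {E : Type*} [AddCommGroup E] [Module ℝ E] [TopologicalSpace E]
  [IsTopologicalAddGroup E] [ContinuousSMul ℝ E] (φ : E →L[ℝ] ℝ) {v : E}

noncomputable def hyperplaneProdHomeomorph (hv : φ v ≠ 0) : ↥{x | φ x = 0} × ℝ ≃ₜ E where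
  toFun p := p.1 + p.2 • v
  invFun y := (⟨y - (φ y / φ v) • v, by simp [hv]⟩, φ y / φ v)
  left_inv := by
    rintro ⟨⟨x, hx : φ x = 0⟩, t⟩
    have ht : φ (x + t • v) / φ v = t := by simp [hx, hv]
    ext
    · simp only [ht]
      simp
    · exact ht
  right_inv y := by simp
  continuous_toFun := by fun_prop
  continuous_invFun := by fun_prop

theorem image_hyperplaneProdHomeomorph_prod (hv : φ v ≠ 0) (S : Set ↥{x | φ x = 0})
    (T : Set ℝ) :
    hyperplaneProdHomeomorph φ hv '' (S ×ˢ T) =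
      {y | ∃ x ∈ Subtype.val '' S, ∃ t ∈ T, y = x + t • v} := by
  ext y
  constructor
  · rintro ⟨⟨x, t⟩, ⟨hx, ht⟩, rfl⟩
    exact ⟨x, ⟨x, hx, rfl⟩, t, ht, rfl⟩
  · rintro ⟨_, ⟨x, hx, rfl⟩, t, ht, rfl⟩
    exact ⟨(x, t), ⟨hx, ht⟩, rfl⟩

theorem frontier_setOf_add_smul (hv : φ v ≠ 0) {F : Set E} (hF : ∀ x ∈ F, φ x = 0)
    (T : Set ℝ) :
    frontier {y | ∃ x ∈ F, ∃ t ∈ T, y = x + t • v} =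
      {y | ∃ x ∈ closure F, ∃ t ∈ frontier T, y = x + t • v} ∪
        {y | ∃ x ∈ Subtype.val '' frontier (Subtype.val ⁻¹' F : Set ↥{x | φ x = 0}),
          ∃ t ∈ closure T, y = x + t • v} := by
  have hH : IsClosed {x | φ x = 0} := isClosed_eq φ.continuous continuous_const
  have hF' : Subtype.val '' (Subtype.val ⁻¹' F : Set ↥{x | φ x = 0}) = F :=
    Subtype.image_preimage_coe _ _ ▸ inter_eq_right.2 hF
  have hcl : Subtype.val '' closure (Subtype.val ⁻¹' F : Set ↥{x | φ x = 0}) = closure F := by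
    rw [← hH.isClosedEmbedding_subtypeVal.closure_image_eq, hF']
  have hcyl : {y | ∃ x ∈ F, ∃ t ∈ T, y = x + t • v} =
      hyperplaneProdHomeomorph φ hv '' ((Subtype.val ⁻¹' F) ×ˢ T) := by
    rw [image_hyperplaneProdHomeomorph_prod, hF']
  rw [hcyl, ← Homeomorph.image_frontier, frontier_prod_eq, image_union,
    image_hyperplaneProdHomeomorph_prod, image_hyperplaneProdHomeomorph_prod, hcl]

theorem frontier_setOf_add_nonpos_smul (hv : φ v ≠ 0) {F : Set E} (hF : ∀ x ∈ F, φ x = 0) :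
    frontier {y | ∃ x ∈ F, ∃ t ≤ (0 : ℝ), y = x + t • v} =
      {y | ∃ x ∈ Subtype.val '' frontier (Subtype.val ⁻¹' F : Set ↥{x | φ x = 0}),
          ∃ t ≤ (0 : ℝ), y = x + t • v} ∪ closure F := by
  have hbase : {y | ∃ x ∈ closure F, ∃ t ∈ ({0} : Set ℝ), y = x + t • v} = closure F := by
    ext
    simp
  have h := frontier_setOf_add_smul φ hv hF (Iic 0)
  rw [frontier_Iic, closure_Iic, hbase, union_comm] at h
  exact h

end Hyperplane

theorem Topology.IsOpenEmbedding.frontier_image_eq_union_singleton {X Y : Type*}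
    [TopologicalSpace X] [TopologicalSpace Y] {f : X → Y} (hf : IsOpenEmbedding f) {s : Set X}
    {p : Y} (hp : p ∉ range f) (hcl : closure (f '' s) ⊆ insert p (range f))
    (hps : p ∈ closure (f '' s)) :
    frontier (f '' s) = f '' frontier s ∪ {p} := by
  have hrange : frontier (f '' s) ∩ range f = f '' frontier s := by
    rw [← image_preimage_eq_inter_range,
      hf.isOpenMap.preimage_frontier_eq_frontier_preimage hf.continuous,
      preimage_image_eq _ hf.injective]
  have hpfr : p ∈ frontier (f '' s) :=
    ⟨hps, fun hint => hp (image_subset_range f s (interior_subset hint))⟩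
  apply Subset.antisymm
  · intro y hy
    rcases hcl (frontier_subset_closure hy) with rfl | hyr
    · exact Or.inr rfl
    · exact Or.inl (hrange ▸ ⟨hy, hyr⟩)
  · rintro y (hy | rfl)
    · exact (hrange ▸ hy).1
    · exact hpfr

theorem Real.exp_add_mul_le_mul_rpow {a b C s u : ℝ} (ha : a ≤ C) (hb : -C ≤ b) (hs : 0 < s)
    (hu : 0 ≤ u) (t : ℝ) :
    Real.exp (a + t * u) ≤ Real.exp (C * (1 + u / s)) * Real.exp (b + t * s) ^ (u / s) := by
  rw [← Real.exp_mul, ← Real.exp_add, Real.exp_le_exp]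
  have hbr : -C * (u / s) ≤ b * (u / s) := mul_le_mul_of_nonneg_right hb (div_nonneg hu hs.le)
  have hcancel : (b + t * s) * (u / s) = b * (u / s) + t * u := by field_simp
  linarith

section PiExp

variable {ι : Type*} {δ : ι → ℝ}

theorem isOpenEmbedding_piExp [Finite ι] : IsOpenEmbedding (fun (x : ι → ℝ) i => Real.exp (x i)) :=
  IsOpenEmbedding.piMap fun _ => Real.isOpenEmbedding_exp

theorem closure_image_piExp_setOf_add_smul_subset [Fintype ι] {F : Set (ι → ℝ)}
    (hF : Bornology.IsBounded F) (hδ : ∀ i, 0 < δ i) (T : Set ℝ) :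
    closure ((fun x i => Real.exp (x i)) '' {y | ∃ x ∈ F, ∃ t ∈ T, y = x + t • δ}) ⊆
      insert 0 (range fun (x : ι → ℝ) i => Real.exp (x i)) := by
  obtain ⟨C, hC⟩ := hF.exists_norm_le
  set G : Set (ι → ℝ) :=
    {y | ∀ i j, 0 ≤ y j ∧ y j ≤ Real.exp (C * (1 + δ j / δ i)) * y i ^ (δ j / δ i)}
  have hG : IsClosed G := by
    simp only [G, ofPred_forall, ofPred_and]
    refine isClosed_iInter fun i => isClosed_iInter fun j => ?_
    refine (isClosed_le continuous_const (continuous_apply j)).inter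
      (isClosed_le (continuous_apply j) (continuous_const.mul ?_))
    exact (continuous_apply i).rpow_const fun _ => Or.inr (div_pos (hδ j) (hδ i)).le
  have hsub : (fun x i => Real.exp (x i)) '' {y | ∃ x ∈ F, ∃ t ∈ T, y = x + t • δ} ⊆ G := by
    rintro _ ⟨_, ⟨x, hx, t, -, rfl⟩, rfl⟩ i j
    have hxC : ∀ k, |x k| ≤ C := fun k => (norm_le_pi_norm x k).trans (hC x hx)
    exact ⟨(Real.exp_pos _).le, Real.exp_add_mul_le_mul_rpow (le_of_abs_le (hxC j))
      (neg_le_of_abs_le (hxC i)) (hδ i) (hδ j).le t⟩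
  intro y hy
  have hyG : y ∈ G := closure_minimal hsub hG hy
  by_cases hpos : ∀ i, 0 < y i
  · exact Or.inr ⟨fun i => Real.log (y i), funext fun i => Real.exp_log (hpos i)⟩
  · obtain ⟨i, hi⟩ := not_forall.1 hpos
    have hyi : y i = 0 := le_antisymm (not_lt.1 hi) (hyG i i).1
    refine Or.inl (funext fun j => le_antisymm ?_ (hyG i j).1)
    have hyj := (hyG i j).2
    rwa [hyi, Real.zero_rpow (div_pos (hδ j) (hδ i)).ne', mul_zero] at hyj

theorem tendsto_piExp_add_smul_atBot (hδ : ∀ i, 0 < δ i) (x : ι → ℝ) :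
    Tendsto (fun t : ℝ => fun i => Real.exp ((x + t • δ) i)) atBot (𝓝 0) :=
  tendsto_pi_nhds.2 fun i =>
    Real.tendsto_exp_atBot.comp
      (tendsto_atBot_add_const_left _ (x i) (tendsto_id.atBot_mul_const (hδ i)))

theorem frontier_image_piExp_setOf_add_nonpos_smul [Fintype ι] [Nonempty ι] {F : Set (ι → ℝ)}
    (hF : Bornology.IsBounded F) (hFne : F.Nonempty) (hδ : ∀ i, 0 < δ i) :
    frontier ((fun x i => Real.exp (x i)) '' {y | ∃ x ∈ F, ∃ t ≤ (0 : ℝ), y = x + t • δ}) =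
      (fun x i => Real.exp (x i)) '' frontier {y | ∃ x ∈ F, ∃ t ≤ (0 : ℝ), y = x + t • δ} ∪
        {0} := by
  refine isOpenEmbedding_piExp.frontier_image_eq_union_singleton ?_
    (closure_image_piExp_setOf_add_smul_subset hF hδ (Iic 0)) ?_
  · rintro ⟨x, hx⟩
    exact (Real.exp_pos _).ne' (congrFun hx (Classical.arbitrary ι))
  · obtain ⟨x, hx⟩ := hFne
    refine mem_closure_of_tendsto (tendsto_piExp_add_smul_atBot hδ x) ?_
    filter_upwards [eventually_le_atBot 0] with t ht
    exact ⟨x + t • δ, ⟨x, hx, t, ht, rfl⟩, rfl⟩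

end PiExp

-- Applied to `x` it unfolds to `∑ i, x i`, so its kernel is, as a type, the hyperplane in `relBoundary`.
def coordSumCLM (ι : Type*) [Fintype ι] : (ι → ℝ) →L[ℝ] ℝ where
  toFun x := ∑ i, x i
  map_add' _ _ := Finset.sum_add_distrib
  map_smul' _ _ := (Finset.mul_sum ..).symm
  cont := by fun_prop

theorem stmt19_general (q : ℕ)
    (δ : Fin (q + 1) → ℝ) (hδ : ∀ i, 1 ≤ δ i)
    (F : Set (Fin (q + 1) → ℝ)) (hFsum : ∀ x ∈ F, ∑ i, x i = 0)
    (hFbd : Bornology.IsBounded F) (hFne : F.Nonempty)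
    (F1 : Set (Fin (q + 1) → ℝ))
    (hF1 : F1 = {y | ∃ x ∈ F, ∃ t ≤ (0 : ℝ), y = x + t • δ})
    (expMap : (Fin (q + 1) → ℝ) → (Fin (q + 1) → ℝ))
    (hexp : expMap = fun x i => Real.exp (x i)) :
    frontier F1 =
        {y | ∃ x ∈ relBoundary q F, ∃ t ≤ (0 : ℝ), y = x + t • δ} ∪ closure F ∧
      frontier (expMap '' F1) = (expMap '' frontier F1) ∪ {0} ∧
      frontier (expMap '' F1) =
        (expMap '' {y | ∃ x ∈ relBoundary q F, ∃ t ≤ (0 : ℝ), y = x + t • δ}) ∪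
          (expMap '' closure F) ∪ {0} := by
  subst hF1 hexp
  have hδpos : ∀ i, 0 < δ i := fun i => one_pos.trans_le (hδ i)
  have hδsum : coordSumCLM (Fin (q + 1)) δ ≠ 0 :=
    (Finset.sum_pos (fun i _ => hδpos i) Finset.univ_nonempty).ne'
  have hfr : frontier {y | ∃ x ∈ F, ∃ t ≤ (0 : ℝ), y = x + t • δ} =
      {y | ∃ x ∈ relBoundary q F, ∃ t ≤ (0 : ℝ), y = x + t • δ} ∪ closure F :=
    frontier_setOf_add_nonpos_smul (coordSumCLM _) hδsum hFsum
  have hexpfr := frontier_image_piExp_setOf_add_nonpos_smul hFbd hFne hδpos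
  exact ⟨hfr, hexpfr, by rw [hexpfr, hfr, image_union]⟩

/-- Decomposition of the boundary of `exp(F(1))`: for `q ≥ 1`, `δ⃗` with all `dᵢ ≥ 1`,
and a nonempty bounded set `F ⊆ Σ`, with `F(1) = F + δ⃗·(−∞,0]`, one has
`∂(F(1)) = (∂F + (−∞,0]δ⃗) ∪ F̄` and
`∂(exp(F(1))) = exp(∂(F(1))) ∪ {0} = exp(∂F + (−∞,0]δ⃗) ∪ exp(F̄) ∪ {0}`,
where `∂F` is the boundary of `F` relative to `Σ` and `exp` acts coordinatewise. -/
theorem stmt19 (q : ℕ) (hq : 1 ≤ q)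
    (δ : Fin (q + 1) → ℝ) (hδ : ∀ i, 1 ≤ δ i)
    (F : Set (Fin (q + 1) → ℝ)) (hFsum : ∀ x ∈ F, ∑ i, x i = 0)
    (hFbd : Bornology.IsBounded F) (hFne : F.Nonempty)
    (F1 : Set (Fin (q + 1) → ℝ))
    (hF1 : F1 = {y | ∃ x ∈ F, ∃ t ≤ (0 : ℝ), y = x + t • δ})
    (expMap : (Fin (q + 1) → ℝ) → (Fin (q + 1) → ℝ))
    (hexp : expMap = fun x i => Real.exp (x i)) :
    frontier F1 =
        {y | ∃ x ∈ relBoundary q F, ∃ t ≤ (0 : ℝ), y = x + t • δ} ∪ closure F ∧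
      frontier (expMap '' F1) = (expMap '' frontier F1) ∪ {0} ∧
      frontier (expMap '' F1) =
        (expMap '' {y | ∃ x ∈ relBoundary q F, ∃ t ≤ (0 : ℝ), y = x + t • δ}) ∪
          (expMap '' closure F) ∪ {0} :=
  stmt19_general q δ hδ F hFsum hFbd hFne F1 hF1 expMap hexp
end
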